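/- Fix κ ≥ 0 and let A ∈ C²(ℝ, M²) be the solution of the initial value problem Ä + κA = Λ(A,Ȧ)·cof A with data (A₀,B₀) ∈ D. Then A is an equilibrium (i.e. Ȧ(t) = 0 for all t ∈ ℝ) if and only if X₁(A₀,B₀) = κ. -/

import Mathlib

/-!
Along a solution, `g = det A` and `ġ = ⟨Ȧ, cof A⟩` satisfy `g̈ = 2κ(1 - g)` wherever `A ≠ 0`
(where `Λ` is not a junk value), so the oscillator energy `ġ² + 2κ(g - 1)²` is locally constant
there. As `|A|² ≥ 2 det A`, the times at which `(A, Ȧ) ∈ D` form an open set; it is also closed,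
hence all of `ℝ`. On `D` the force `Ä + κA = Λ cof A` is normal to `Ȧ`, so `X₁` is conserved, and
`X₁ ≥ ½|Ȧ|² + κ` because `|A|² ≥ 2`: thus `X₁ = κ` forces `Ȧ ≡ 0`. Conversely, at an equilibrium
`κA = (2κ/|A|²) cof A`; pairing with `A` gives `κ|A|⁴ = 4κ`, i.e. `κ|A|² = 2κ`.
-/

open Matrix

noncomputable section

/-- `M²`: the space of 2×2 real matrices. -/
abbrev M2 : Type := Matrix (Fin 2) (Fin 2) ℝ

/-- Frobenius inner product `⟨A,B⟩ = tr(AᵀB)`. -/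
def mip (A B : M2) : ℝ := (Aᵀ * B).trace

/-- Frobenius norm `|A| = ⟨A,A⟩^{1/2}`. -/
def fnorm (A : M2) : ℝ := Real.sqrt (mip A A)

/-- The matrix Z = [[0,−1],[1,0]]. -/
def Zm : M2 := !![0, -1; 1, 0]

/-- The matrix K = [[1,0],[0,−1]]. -/
def Km : M2 := !![1, 0; 0, -1]

/-- The matrix M = [[0,1],[1,0]]. -/
def Mm : M2 := !![0, 1; 1, 0]

/-- Cofactor: cof [[a,b],[c,d]] = [[d,−c],[−b,a]]. -/
def cofm (A : M2) : M2 := !![A 1 1, -(A 1 0); -(A 0 1), A 0 0]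

/-- Membership in SO(2,ℝ). -/
def isSO (U : M2) : Prop := U.det = 1 ∧ U⁻¹ = Uᵀ

/-- The rotation U(θ) = cos θ·I + sin θ·Z. -/
def Um (θ : ℝ) : M2 := Real.cos θ • (1 : M2) + Real.sin θ • Zm

/-- Invariant X₁(A,B) = ½|B|² + (κ/2)|A|². -/
def X1 (κ : ℝ) (A B : M2) : ℝ := (1/2) * mip B B + (κ/2) * mip A A

/-- Invariant X₂(A,B) = ½⟨ZA − AZ, B⟩. -/
def X2 (A B : M2) : ℝ := (1/2) * mip (Zm * A - A * Zm) B

/-- Invariant X₃(A,B) = ½⟨ZA + AZ, B⟩. -/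
def X3 (A B : M2) : ℝ := (1/2) * mip (Zm * A + A * Zm) B

/-- Lagrange multiplier Λ(A,B) = 2(κ − det B)/|A|². -/
def Lam (κ : ℝ) (A B : M2) : ℝ := 2 * (κ - B.det) / (mip A A)

attribute [local instance] Matrix.normedAddCommGroup Matrix.normedSpace

theorem mip_fin_two (X Y : M2) :
    mip X Y = X 0 0 * Y 0 0 + X 0 1 * Y 0 1 + X 1 0 * Y 1 0 + X 1 1 * Y 1 1 := by
  simp only [mip, trace_fin_two, mul_apply, transpose_apply, Fin.sum_univ_two]
  ring

theorem mip_comm (X Y : M2) : mip X Y = mip Y X := by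
  simp only [mip_fin_two]; ring

theorem mip_sub_right (X Y Z : M2) : mip X (Y - Z) = mip X Y - mip X Z := by
  simp only [mip_fin_two, Matrix.sub_apply]; ring

theorem mip_sub_left (X Y Z : M2) : mip (X - Y) Z = mip X Z - mip Y Z := by
  simp only [mip_fin_two, Matrix.sub_apply]; ring

theorem mip_smul_left (c : ℝ) (X Y : M2) : mip (c • X) Y = c * mip X Y := by
  simp only [mip_fin_two, Matrix.smul_apply, smul_eq_mul]; ring

theorem mip_smul_right (c : ℝ) (X Y : M2) : mip X (c • Y) = c * mip X Y := by
  rw [mip_comm, mip_smul_left, mip_comm]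

theorem mip_self_nonneg (X : M2) : 0 ≤ mip X X :=
  (posSemidef_conjTranspose_mul_self X).trace_nonneg

theorem mip_self_eq_zero_iff {X : M2} : mip X X = 0 ↔ X = 0 :=
  trace_conjTranspose_mul_self_eq_zero_iff

theorem mip_cofm_self (X : M2) : mip X (cofm X) = 2 * X.det := by
  simp only [mip_fin_two, cofm, det_fin_two, of_apply, cons_val', cons_val_zero, cons_val_one,
    empty_val', cons_val_fin_one]
  ring

theorem mip_cofm_cofm (X : M2) : mip (cofm X) (cofm X) = mip X X := by
  simp only [mip_fin_two, cofm, of_apply, cons_val', cons_val_zero, cons_val_one,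
    empty_val', cons_val_fin_one]
  ring

theorem two_mul_det_le_mip_self (X : M2) : 2 * X.det ≤ mip X X := by
  rw [mip_fin_two, det_fin_two]
  nlinarith [sq_nonneg (X 0 0 - X 1 1), sq_nonneg (X 0 1 + X 1 0)]

section Calculus

variable {f g : ℝ → M2} {f' g' : M2} {t : ℝ}

theorem hasDerivAt_matrix_iff {m n : Type*} [Fintype m] [Fintype n] {f : ℝ → Matrix m n ℝ}
    {f' : Matrix m n ℝ} : HasDerivAt f f' t ↔ ∀ i j, HasDerivAt (fun s ↦ f s i j) (f' i j) t :=
  hasDerivAt_pi.trans (forall_congr' fun _ ↦ hasDerivAt_pi)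

theorem HasDerivAt.mip (hf : HasDerivAt f f' t) (hg : HasDerivAt g g' t) :
    HasDerivAt (fun s ↦ _root_.mip (f s) (g s)) (_root_.mip f' (g t) + _root_.mip (f t) g') t := by
  rw [hasDerivAt_matrix_iff] at hf hg
  simp only [mip_fin_two]
  exact (((((hf 0 0).fun_mul (hg 0 0)).fun_add ((hf 0 1).fun_mul (hg 0 1))).fun_add
    ((hf 1 0).fun_mul (hg 1 0))).fun_add ((hf 1 1).fun_mul (hg 1 1))).congr_deriv (by ring)

theorem HasDerivAt.det_fin_two (hf : HasDerivAt f f' t) :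
    HasDerivAt (fun s ↦ (f s).det) (_root_.mip f' (_root_.cofm (f t))) t := by
  rw [hasDerivAt_matrix_iff] at hf
  simp only [Matrix.det_fin_two, mip_fin_two, cofm, of_apply, cons_val', cons_val_zero,
    cons_val_one, empty_val', cons_val_fin_one]
  exact (((hf 0 0).fun_mul (hf 1 1)).fun_sub ((hf 0 1).fun_mul (hf 1 0))).congr_deriv (by ring)

theorem HasDerivAt.cofm (hf : HasDerivAt f f' t) :
    HasDerivAt (fun s ↦ _root_.cofm (f s)) (_root_.cofm f') t := by
  rw [hasDerivAt_matrix_iff] at hf ⊢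
  intro i j
  fin_cases i <;> fin_cases j
  · exact hf 1 1
  · exact (hf 1 0).neg
  · exact (hf 0 1).neg
  · exact hf 0 0

end Calculus

theorem cofm_eq_transpose_adjugate (X : M2) : cofm X = (adjugate X)ᵀ := by
  ext i j
  fin_cases i <;> fin_cases j <;> simp [cofm, adjugate_fin_two]

theorem continuous_cofm : Continuous cofm :=
  continuous_id.matrix_adjugate.matrix_transpose.congr fun X ↦ (cofm_eq_transpose_adjugate X).symm

theorem continuous_mip : Continuous fun p : M2 × M2 ↦ mip p.1 p.2 :=
  (continuous_fst.matrix_transpose.matrix_mul continuous_snd).matrix_trace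

/-- The set `D` of the paper, i.e. the tangent bundle of `SL(2,ℝ)`. -/
def tangentSL2 : Set (M2 × M2) := {p | p.1.det = 1 ∧ mip p.2 (cofm p.1) = 0}

theorem isClosed_tangentSL2 : IsClosed tangentSL2 :=
  (isClosed_eq continuous_fst.matrix_det continuous_const).inter
    (isClosed_eq (continuous_mip.comp (continuous_snd.prodMk (continuous_cofm.comp continuous_fst)))
      continuous_const)

structure IsSolution (κ : ℝ) (A : ℝ → M2) : Prop where
  differentiable : Differentiable ℝ A
  differentiable_deriv : Differentiable ℝ (deriv A)
  ode : ∀ t, deriv (deriv A) t + κ • A t = Lam κ (A t) (deriv A t) • cofm (A t)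

namespace IsSolution

variable {κ : ℝ} {A : ℝ → M2}

theorem hasDerivAt (hA : IsSolution κ A) (t : ℝ) : HasDerivAt A (deriv A t) t :=
  (hA.differentiable t).hasDerivAt

theorem hasDerivAt_deriv (hA : IsSolution κ A) (t : ℝ) :
    HasDerivAt (deriv A) (deriv (deriv A) t) t :=
  (hA.differentiable_deriv t).hasDerivAt

theorem hasDerivAt_mip_deriv_cofm (hA : IsSolution κ A) {t : ℝ} (ht : mip (A t) (A t) ≠ 0) :
    HasDerivAt (fun s ↦ mip (deriv A s) (cofm (A s))) (2 * κ * (1 - (A t).det)) t := by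
  refine ((hA.hasDerivAt_deriv t).mip (hA.hasDerivAt t).cofm).congr_deriv ?_
  rw [eq_sub_of_add_eq (hA.ode t), mip_sub_left, mip_smul_left, mip_smul_left, mip_cofm_cofm,
    mip_comm (A t), mip_cofm_self, mip_cofm_self, Lam]
  field_simp
  ring

theorem hasDerivAt_constraint_energy (hA : IsSolution κ A) {t : ℝ} (ht : mip (A t) (A t) ≠ 0) :
    HasDerivAt (fun s ↦ mip (deriv A s) (cofm (A s)) ^ 2 + 2 * κ * ((A s).det - 1) ^ 2) 0 t := by
  have hdet := (hA.hasDerivAt t).det_fin_two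
  exact (((hA.hasDerivAt_mip_deriv_cofm ht).pow 2).add
    (((hdet.sub_const 1).pow 2).const_mul (2 * κ))).congr_deriv
      (by push_cast; ring)

theorem isOpen_setOf_mem_tangentSL2 (hA : IsSolution κ A) (hκ : 0 ≤ κ) :
    IsOpen {t | (A t, deriv A t) ∈ tangentSL2} := by
  set G := fun s ↦ mip (deriv A s) (cofm (A s))
  set E := fun s ↦ G s ^ 2 + 2 * κ * ((A s).det - 1) ^ 2
  set U := {t | mip (A t) (A t) ≠ 0}
  have hU : IsOpen U := isOpen_ne_fun
    (continuous_mip.comp (hA.differentiable.continuous.prodMk hA.differentiable.continuous))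
    continuous_const
  have hE : ∀ t ∈ U, HasDerivAt E 0 t := fun t ht ↦ hA.hasDerivAt_constraint_energy ht
  have hW : IsOpen (U ∩ E ⁻¹' {0}) := hU.isOpen_inter_preimage_of_deriv_eq_zero
    (fun t ht ↦ (hE t ht).differentiableAt.differentiableWithinAt) (fun t ht ↦ (hE t ht).deriv) _
  have hG : ∀ t ∈ U ∩ E ⁻¹' {0}, G t = 0 := by
    rintro t ⟨-, hEt⟩
    have hEt : G t ^ 2 + 2 * κ * ((A t).det - 1) ^ 2 = 0 := hEt
    nlinarith [sq_nonneg (G t), mul_nonneg hκ (sq_nonneg ((A t).det - 1))]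
  have hdet : ∀ t ∈ U ∩ E ⁻¹' {0}, HasDerivAt (fun s ↦ (A s).det) 0 t := fun t ht ↦
    hG t ht ▸ (hA.hasDerivAt t).det_fin_two
  convert hW.isOpen_inter_preimage_of_deriv_eq_zero
    (fun t ht ↦ (hdet t ht).differentiableAt.differentiableWithinAt)
    (fun t ht ↦ (hdet t ht).deriv) {1} using 1
  ext t
  constructor
  · rintro ⟨hdet1, hG0⟩
    refine ⟨⟨?_, ?_⟩, hdet1⟩
    · exact (show 0 < mip (A t) (A t) by linarith [two_mul_det_le_mip_self (A t)]).ne'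
    · simp [E, G, hdet1, hG0]
  · rintro ⟨ht, hdet1⟩
    exact ⟨hdet1, hG t ht⟩

theorem isClosed_setOf_mem_tangentSL2 (hA : IsSolution κ A) :
    IsClosed {t | (A t, deriv A t) ∈ tangentSL2} :=
  isClosed_tangentSL2.preimage
    (hA.differentiable.continuous.prodMk hA.differentiable_deriv.continuous)

theorem mem_tangentSL2 (hA : IsSolution κ A) (hκ : 0 ≤ κ) {t₀ : ℝ}
    (h₀ : (A t₀, deriv A t₀) ∈ tangentSL2) (t : ℝ) : (A t, deriv A t) ∈ tangentSL2 := by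
  have hclopen : IsClopen {t | (A t, deriv A t) ∈ tangentSL2} :=
    ⟨hA.isClosed_setOf_mem_tangentSL2, hA.isOpen_setOf_mem_tangentSL2 hκ⟩
  exact Set.eq_univ_iff_forall.mp (hclopen.eq_univ ⟨t₀, h₀⟩) t

theorem X1_eq (hA : IsSolution κ A) (hD : ∀ t, (A t, deriv A t) ∈ tangentSL2) (s t : ℝ) :
    X1 κ (A s) (deriv A s) = X1 κ (A t) (deriv A t) := by
  have hX1 : ∀ t, HasDerivAt (fun s ↦ X1 κ (A s) (deriv A s)) 0 t := fun t ↦ by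
    refine ((((hA.hasDerivAt_deriv t).mip (hA.hasDerivAt_deriv t)).const_mul (1 / 2)).add
      (((hA.hasDerivAt t).mip (hA.hasDerivAt t)).const_mul (κ / 2))).congr_deriv ?_
    rw [mip_comm (deriv (deriv A) t), mip_comm (A t), eq_sub_of_add_eq (hA.ode t), mip_sub_right,
      mip_smul_right, mip_smul_right, (hD t).2]
    ring
  exact is_const_of_deriv_eq_zero (fun t ↦ (hX1 t).differentiableAt) (fun t ↦ (hX1 t).deriv) s t

end IsSolution

theorem eq_zero_of_X1_le {κ : ℝ} (hκ : 0 ≤ κ) {A B : M2} (hA : A.det = 1) (h : X1 κ A B ≤ κ) :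
    B = 0 := by
  have hAA := two_mul_det_le_mip_self A
  rw [hA] at hAA
  have hBB : mip B B ≤ 0 := by
    unfold X1 at h
    nlinarith
  exact mip_self_eq_zero_iff.mp (le_antisymm hBB (mip_self_nonneg B))

theorem X1_eq_of_smul_eq_Lam_smul_cofm {κ : ℝ} {A : M2} (hA : A.det = 1)
    (h : κ • A = Lam κ A 0 • cofm A) : X1 κ A 0 = κ := by
  have hAA := two_mul_det_le_mip_self A
  rw [hA] at hAA
  have key : κ * mip A A = Lam κ A 0 * (2 * A.det) := by
    simpa only [mip_smul_right, mip_cofm_self] using congrArg (mip A) h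
  rw [Lam, det_zero, hA] at key
  field_simp at key
  have hκA : κ * mip A A = 2 * κ := by
    have hfac : κ * (mip A A - 2) * (mip A A + 2) = 0 := by linear_combination key
    rcases mul_eq_zero.mp hfac with h | h
    · linear_combination h
    · linarith
  rw [X1, mip_self_eq_zero_iff.mpr rfl]
  linear_combination hκA / 2

/-- equilibria are characterized by X₁ = κ. -/
theorem equilibrium_iff (κ : ℝ) (hκ : 0 ≤ κ) (A₀ B₀ : M2)
    (hdet : A₀.det = 1) (htan : mip B₀ (cofm A₀) = 0)
    (A : ℝ → M2) (hA : ContDiff ℝ 2 A)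
    (hA0 : A 0 = A₀) (hB0 : deriv A 0 = B₀)
    (hode : ∀ t : ℝ, deriv (deriv A) t + κ • A t
      = Lam κ (A t) (deriv A t) • cofm (A t)) :
    (∀ t : ℝ, deriv A t = 0) ↔ X1 κ A₀ B₀ = κ := by
  have hsol : IsSolution κ A := ⟨hA.differentiable two_ne_zero, hA.differentiable_deriv_two, hode⟩
  constructor
  · intro hrest
    have hacc : deriv (deriv A) 0 = 0 := by
      rw [show deriv A = fun _ ↦ 0 from funext hrest]
      exact deriv_const 0 0
    have h := hode 0
    rw [hacc, hrest 0, zero_add, hA0] at h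
    rw [← hB0, hrest 0]
    exact X1_eq_of_smul_eq_Lam_smul_cofm hdet h
  · intro hX t
    have hD := hsol.mem_tangentSL2 hκ (t₀ := 0) (by rw [hA0, hB0]; exact ⟨hdet, htan⟩)
    exact eq_zero_of_X1_le hκ (hD t).1 (by rw [hsol.X1_eq hD t 0, hA0, hB0, hX])
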